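/- arXiv:1802.05824 — 5 statements merged into one kernel-verified Lean document; each statement's English description precedes it below -/
import Mathlib

section
/- Let M be a weighted brick complex with an ordering O of its N bricks, with sublevel sets M_j (the union of the first j bricks) and level surfaces S_j (the facets lying in both M_j and its complement). Then for every j in [N], S_j is obtained from S_{j−1} by varying across the brick T_j at height j, and consequently Λ(j) − Λ(j−1) = σ(T_j; S_{j−1}), where Λ(j) = ω(S_j). -/
open Finset

/-- The total weight of a set of facets. -/
def wt {Facet : Type} [DecidableEq Facet] (ω : Facet → ℝ) (S : Finset Facet) : ℝ :=
  ∑ f ∈ S, ω f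

/-- The strength σ(A;S) of a brick with set of interior facets `intA`
relative to a surface `S`:  ω(∂'_S A) − ω(∂_S A). -/
def strength {Facet : Type} [DecidableEq Facet] (ω : Facet → ℝ) (intA S : Finset Facet) : ℝ :=
  wt ω (intA \ S) - wt ω (intA ∩ S)

/-- A surface (set of facets) is proper if none of its facets lies in ∂M and every
(n−2)-face not in ∂M is contained in an even number of its facets. -/
def ProperSurf {Facet Face : Type} [DecidableEq Facet] [DecidableEq Face]
    (bdF : Finset Facet) (facesOf : Facet → Finset Face) (bdE : Finset Face)
    (S : Finset Facet) : Prop :=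
  (∀ f ∈ S, f ∉ bdF) ∧
  ∀ e : Face, e ∉ bdE → Even ((S.filter (fun f => e ∈ facesOf f)).card)

/-- The interior facets ∂_I A of a brick `A`: facets incident to exactly two bricks,
one of which is `A`. -/
def intFacets {Brick Facet : Type} [DecidableEq Brick] [Fintype Facet] [DecidableEq Facet]
    (bricksOf : Facet → Finset Brick) (A : Brick) : Finset Facet :=
  univ.filter (fun f => A ∈ bricksOf f ∧ (bricksOf f).card = 2)

/-- The facets shared by two bricks `A` and `B` (∂A ⊓ ∂B). -/
def commonFacets {Brick Facet : Type} [DecidableEq Brick] [Fintype Facet] [DecidableEq Facet]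
    (bricksOf : Facet → Finset Brick) (A B : Brick) : Finset Facet :=
  univ.filter (fun f => A ∈ bricksOf f ∧ B ∈ bricksOf f)

/-- `A` is a shortening move for `S` (given interior facets `intA` of `A`):
it meets `S` and σ(A;S) ≤ 0. -/
def ShortMove {Facet : Type} [DecidableEq Facet] (ω : Facet → ℝ) (intA S : Finset Facet) : Prop :=
  (intA ∩ S).Nonempty ∧ strength ω intA S ≤ 0

/-- `A` is a strict shortening move for `S`: it meets `S` and σ(A;S) < 0. -/
def StrictShort {Facet : Type} [DecidableEq Facet] (ω : Facet → ℝ) (intA S : Finset Facet) : Prop :=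
  (intA ∩ S).Nonempty ∧ strength ω intA S < 0

/-- The sublevel set M_j of an ordering: the bricks at heights 1,…,j. -/
def sublevel {Brick : Type} [Fintype Brick] [DecidableEq Brick] {N : ℕ}
    (O : Fin N ≃ Brick) (j : ℕ) : Finset Brick :=
  univ.filter (fun T => ((O.symm T : Fin N) : ℕ) + 1 ≤ j)

/-- The level surface S_j at height j: facets shared between a brick of M_j and a
brick not in M_j. -/
def levelSurf {Brick Facet : Type} [Fintype Brick] [DecidableEq Brick]
    [Fintype Facet] [DecidableEq Facet]
    (bricksOf : Facet → Finset Brick) {N : ℕ} (O : Fin N ≃ Brick) (j : ℕ) : Finset Facet :=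
  univ.filter (fun f => (∃ T ∈ bricksOf f, T ∈ sublevel O j) ∧ ∃ T ∈ bricksOf f, T ∉ sublevel O j)

/-- Λ(j): the weight of the level surface at height j. -/
def Lam {Brick Facet : Type} [Fintype Brick] [DecidableEq Brick]
    [Fintype Facet] [DecidableEq Facet] (ω : Facet → ℝ)
    (bricksOf : Facet → Finset Brick) {N : ℕ} (O : Fin N ≃ Brick) (j : ℕ) : ℝ :=
  wt ω (levelSurf bricksOf O j)

/-- for every j ∈ [N], the level surface S_j is obtained from S_{j−1}
by varying across the brick T_j at height j, and Λ(j) − Λ(j−1) = σ(T_j; S_{j−1}). -/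
theorem stmt2 {Brick Facet : Type} [Fintype Brick] [DecidableEq Brick]
    [Fintype Facet] [DecidableEq Facet]
    (ω : Facet → ℝ) (hω : ∀ f, 0 ≤ ω f)
    (bricksOf : Facet → Finset Brick)
    (hBC : ∀ f, (bricksOf f).card = 1 ∨ (bricksOf f).card = 2)
    {N : ℕ} (O : Fin N ≃ Brick) (j : Fin N) :
    levelSurf bricksOf O ((j : ℕ) + 1)
      = symmDiff (levelSurf bricksOf O (j : ℕ)) (intFacets bricksOf (O j)) ∧
    Lam ω bricksOf O ((j : ℕ) + 1) - Lam ω bricksOf O (j : ℕ)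
      = strength ω (intFacets bricksOf (O j)) (levelSurf bricksOf O (j : ℕ)) := by
  have hAnot : O j ∉ sublevel O (j : ℕ) := by
    simp [sublevel]
  have hmem : ∀ T : Brick, T ∈ sublevel O ((j:ℕ)+1) ↔ T ∈ sublevel O (j:ℕ) ∨ T = O j := by
    intro T
    simp only [sublevel, mem_filter, mem_univ, true_and]
    constructor
    · intro h
      rcases lt_or_eq_of_le (Nat.lt_succ_iff.mp h) with h' | h'
      · exact Or.inl h'
      · right
        have : O.symm T = j := Fin.ext h'
        rw [← this]; simp
    · rintro (h | rfl)
      · omega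
      · simp
  have hS : levelSurf bricksOf O ((j:ℕ)+1)
      = symmDiff (levelSurf bricksOf O (j:ℕ)) (intFacets bricksOf (O j)) := by
    ext f
    rcases hBC f with h1 | h2
    · obtain ⟨B, hB⟩ := Finset.card_eq_one.mp h1
      simp [levelSurf, intFacets, Finset.mem_symmDiff, hB]
    · obtain ⟨B, C, hBne, hBCset⟩ := Finset.card_eq_two.mp h2
      have hcard : ({B, C} : Finset Brick).card = 2 := hBCset ▸ h2
      simp only [levelSurf, intFacets, Finset.mem_symmDiff, mem_filter, mem_univ, true_and,
        hBCset, Finset.mem_insert, Finset.mem_singleton, hcard, and_true, hmem,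
        exists_eq_or_imp, exists_eq_left]
      by_cases hAB : O j = B <;> by_cases hAC : O j = C <;>
        subst_vars <;> simp_all <;> tauto
  refine ⟨hS, ?_⟩
  set I := intFacets bricksOf (O j) with hI
  set S := levelSurf bricksOf O (j:ℕ) with hSdef
  have e1 : Lam ω bricksOf O ((j:ℕ)+1) = wt ω (S \ I) + wt ω (I \ S) := by
    rw [Lam, hS, symmDiff_def]
    exact Finset.sum_union disjoint_sdiff_sdiff
  have e2 : Lam ω bricksOf O (j:ℕ) = wt ω (S ∩ I) + wt ω (S \ I) :=
    (Finset.sum_inter_add_sum_sdiff S I ω).symm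
  have e3 : wt ω (I ∩ S) = wt ω (S ∩ I) := by rw [Finset.inter_comm]
  rw [e1, e2, strength, e3]
  ring
end

section
/- Let S be a proper surface in a weighted brick complex and A, B two distinct bricks with F = ∂A ⊓ ∂B ⊆ S (all facets common to A and B lie in S). Then the double variation satisfies S_{AB} = S_{BA} and ω(S_{AB}) = ω(S) + σ(A;S) + σ(B;S) + 2ω(F). -/
open Finset

lemma wt_sdiff' {Facet : Type} [DecidableEq Facet] (ω : Facet → ℝ) {F T : Finset Facet}
    (h : F ⊆ T) : wt ω (T \ F) = wt ω T - wt ω F := by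
  have := Finset.sum_sdiff (f := ω) h
  simp only [wt]; linarith

lemma wt_symmDiff {Facet : Type} [DecidableEq Facet] (ω : Facet → ℝ) (S T : Finset Facet) :
    wt ω (symmDiff S T) = wt ω S + strength ω T S := by
  have h1 : symmDiff S T = (S \ T) ∪ (T \ S) := by
    ext f; simp [Finset.mem_symmDiff]
  have hd : Disjoint (S \ T) (T \ S) := by
    rw [Finset.disjoint_left]; intro a ha hb
    exact (Finset.mem_sdiff.mp hb).2 (Finset.mem_sdiff.mp ha).1
  have h2 : wt ω (symmDiff S T) = wt ω (S \ T) + wt ω (T \ S) := by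
    rw [h1]; exact Finset.sum_union hd
  have h4 : S \ (S ∩ T) = S \ T := by ext f; simp
  have h3 : wt ω (S \ T) = wt ω S - wt ω (S ∩ T) := by
    rw [← h4]; exact wt_sdiff' ω Finset.inter_subset_left
  rw [h2, h3, strength, Finset.inter_comm]; ring

/-- if `A ≠ B` are bricks all of whose common facets `F = ∂A ⊓ ∂B`
lie in the proper surface `S`, then the double variations agree, `S_{AB} = S_{BA}`,
and ω(S_{AB}) = ω(S) + σ(A;S) + σ(B;S) + 2ω(F). -/
theorem stmt3 {Brick Facet Face : Type} [Fintype Brick] [DecidableEq Brick]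
    [Fintype Facet] [DecidableEq Facet] [DecidableEq Face]
    (ω : Facet → ℝ) (hω : ∀ f, 0 ≤ ω f)
    (bricksOf : Facet → Finset Brick)
    (hBC : ∀ f, (bricksOf f).card = 1 ∨ (bricksOf f).card = 2)
    (bdF : Finset Facet) (facesOf : Facet → Finset Face) (bdE : Finset Face)
    (S : Finset Facet) (hS : ProperSurf bdF facesOf bdE S)
    (A B : Brick) (hAB : A ≠ B)
    (hF : commonFacets bricksOf A B ⊆ S) :
    symmDiff (symmDiff S (intFacets bricksOf A)) (intFacets bricksOf B)
      = symmDiff (symmDiff S (intFacets bricksOf B)) (intFacets bricksOf A) ∧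
    wt ω (symmDiff (symmDiff S (intFacets bricksOf A)) (intFacets bricksOf B))
      = wt ω S + strength ω (intFacets bricksOf A) S + strength ω (intFacets bricksOf B) S
        + 2 * wt ω (commonFacets bricksOf A B) := by
  set IA := intFacets bricksOf A with hIA
  set IB := intFacets bricksOf B with hIB
  set F := commonFacets bricksOf A B with hFdef
  have hFeq : F = IA ∩ IB := by
    ext f
    simp only [hFdef, hIA, hIB, commonFacets, intFacets, Finset.mem_inter,
      Finset.mem_filter, Finset.mem_univ, true_and]
    constructor
    · rintro ⟨hA, hB⟩
      have hc : (bricksOf f).card = 2 := by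
        rcases hBC f with h1 | h2
        · exfalso
          rw [Finset.card_eq_one] at h1
          obtain ⟨a, ha⟩ := h1
          rw [ha, Finset.mem_singleton] at hA hB
          exact hAB (hA.trans hB.symm)
        · exact h2
      exact ⟨⟨hA, hc⟩, hB, hc⟩
    · rintro ⟨⟨hA, _⟩, hB, _⟩; exact ⟨hA, hB⟩
  -- key: for X Y with X ∩ Y = F ⊆ S, Y ∩ (S Δ X) = (Y ∩ S) \ F
  have key : ∀ X Y : Finset Facet, X ∩ Y = F → Y ∩ symmDiff S X = (Y ∩ S) \ F := by
    intro X Y hXY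
    ext f
    simp only [Finset.mem_inter, Finset.mem_sdiff, Finset.mem_symmDiff]
    constructor
    · rintro ⟨hfY, hfS | hfX⟩
      · refine ⟨⟨hfY, hfS.1⟩, ?_⟩
        rw [← hXY]; simp only [Finset.mem_inter]; tauto
      · exfalso
        exact hfX.2 (hF (hXY ▸ Finset.mem_inter.mpr ⟨hfX.1, hfY⟩))
    · rintro ⟨⟨hfY, hfS⟩, hfF⟩
      refine ⟨hfY, Or.inl ⟨hfS, fun hfX => hfF ?_⟩⟩
      rw [← hXY]; exact Finset.mem_inter.mpr ⟨hfX, hfY⟩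
  have hFS : F ⊆ S := hF
  have wkey : ∀ X Y : Finset Facet, X ∩ Y = F →
      strength ω Y (symmDiff S X) = strength ω Y S + 2 * wt ω F := by
    intro X Y hXY
    have h1 : Y ∩ (S ∩ Y) = Y ∩ S := by ext f; simp; tauto
    have hFsub : F ⊆ Y ∩ S := by
      intro f hf
      refine Finset.mem_inter.mpr ⟨?_, hFS hf⟩
      rw [← hXY] at hf; exact (Finset.mem_inter.mp hf).2
    have h2 : wt ω (Y ∩ symmDiff S X) = wt ω (Y ∩ S) - wt ω F := by
      rw [key X Y hXY, wt_sdiff' ω hFsub]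
    -- strength ω Y T = wt Y - 2 * wt (Y ∩ T)
    have gen : ∀ T : Finset Facet, strength ω Y T = wt ω Y - 2 * wt ω (Y ∩ T) := by
      intro T
      have : wt ω (Y \ T) = wt ω Y - wt ω (Y ∩ T) := by
        have h4 : Y \ (Y ∩ T) = Y \ T := by ext f; simp
        rw [← h4]; exact wt_sdiff' ω Finset.inter_subset_left
      rw [strength, this]; ring
    rw [gen, gen, h2]; ring
  have hIAIB : IA ∩ IB = F := hFeq.symm
  have hIBIA : IB ∩ IA = F := by rw [Finset.inter_comm]; exact hFeq.symm
  constructor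
  · rw [symmDiff_assoc, symmDiff_comm IA IB, ← symmDiff_assoc]
  · rw [wt_symmDiff, wt_symmDiff, wkey IA IB hIAIB]; ring
end

section
/- Let O be an ordering of a weighted brick complex, i an index, A = O⁻¹(i), B = O⁻¹(i+1), F = ∂A ⊓ ∂B, and let O' = τ_i ∘ O be obtained by swapping A and B. Then the level surfaces satisfy S'_j = S_j for all j ≠ i, and Λ'(i) = Λ(i) + σ(A;S_i) + σ(B;S_i) + 2ω(F), where Λ(j) = ω(S_j) and Λ'(j) = ω(S'_j). -/
open Finset

/-- swapping the bricks A = O⁻¹(i), B = O⁻¹(i+1) of an ordering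
(here A is at 1-indexed height i+1 with i = (iv)+1 for iv : Fin N) leaves all level
surfaces unchanged except at height i, and
Λ'(i) = Λ(i) + σ(A;S_i) + σ(B;S_i) + 2ω(F) where F = ∂A ⊓ ∂B. -/
theorem stmt6 {Brick Facet : Type} [Fintype Brick] [DecidableEq Brick]
    [Fintype Facet] [DecidableEq Facet]
    (ω : Facet → ℝ) (hω : ∀ f, 0 ≤ ω f)
    (bricksOf : Facet → Finset Brick)
    (hBC : ∀ f, (bricksOf f).card = 1 ∨ (bricksOf f).card = 2)
    {N : ℕ} (O : Fin N ≃ Brick) (i : Fin N) (hi : (i : ℕ) + 1 < N)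
    (O' : Fin N ≃ Brick) (hO' : O' = (Equiv.swap i ⟨(i : ℕ) + 1, hi⟩).trans O) :
    (∀ j : ℕ, j ≠ (i : ℕ) + 1 → levelSurf bricksOf O' j = levelSurf bricksOf O j) ∧
    Lam ω bricksOf O' ((i : ℕ) + 1)
      = Lam ω bricksOf O ((i : ℕ) + 1)
        + strength ω (intFacets bricksOf (O i)) (levelSurf bricksOf O ((i : ℕ) + 1))
        + strength ω (intFacets bricksOf (O ⟨(i : ℕ) + 1, hi⟩)) (levelSurf bricksOf O ((i : ℕ) + 1))
        + 2 * wt ω (commonFacets bricksOf (O i) (O ⟨(i : ℕ) + 1, hi⟩)) := by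
  set i' : Fin N := ⟨(i : ℕ) + 1, hi⟩ with hi'def
  have hii' : i ≠ i' := by
    intro h
    have : (i : ℕ) = (i : ℕ) + 1 := congrArg Fin.val h
    omega
  have hAB : O i ≠ O i' := fun h => hii' (O.injective h)
  have hsymm : ∀ T, O'.symm T = Equiv.swap i i' (O.symm T) := by
    intro T; rw [hO']; simp
  -- sublevel sets agree away from height i+1
  have hsub : ∀ j : ℕ, j ≠ (i : ℕ) + 1 → sublevel O' j = sublevel O j := by
    intro j hj
    ext T
    simp only [sublevel, mem_filter, mem_univ, true_and, hsymm]
    rcases eq_or_ne (O.symm T) i with h | h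
    · rw [h, Equiv.swap_apply_left]
      have h1 : ((i' : Fin N) : ℕ) = (i : ℕ) + 1 := rfl
      rw [h1]; omega
    rcases eq_or_ne (O.symm T) i' with h2 | h2
    · rw [h2, Equiv.swap_apply_right]
      have h1 : ((i' : Fin N) : ℕ) = (i : ℕ) + 1 := rfl
      rw [h1]; omega
    · rw [Equiv.swap_apply_of_ne_of_ne h h2]
  have part1 : ∀ j : ℕ, j ≠ (i : ℕ) + 1 → levelSurf bricksOf O' j = levelSurf bricksOf O j := by
    intro j hj
    simp only [levelSurf, hsub j hj]
  refine ⟨part1, ?_⟩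
  -- membership facts for the sublevel sets at height i+1
  have hA_MS : O i ∈ sublevel O ((i : ℕ) + 1) := by
    simp [sublevel]
  have hB_MS : O i' ∉ sublevel O ((i : ℕ) + 1) := by
    simp only [sublevel, mem_filter, mem_univ, true_and, Equiv.symm_apply_apply]
    show ¬((i : ℕ) + 1 + 1 ≤ (i : ℕ) + 1)
    omega
  have hA_MS' : O i ∉ sublevel O' ((i : ℕ) + 1) := by
    simp only [sublevel, mem_filter, mem_univ, true_and, hsymm, Equiv.symm_apply_apply,
      Equiv.swap_apply_left]
    show ¬((i : ℕ) + 1 + 1 ≤ (i : ℕ) + 1)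
    omega
  have hB_MS' : O i' ∈ sublevel O' ((i : ℕ) + 1) := by
    simp only [sublevel, mem_filter, mem_univ, true_and, hsymm, Equiv.symm_apply_apply,
      Equiv.swap_apply_right]
    show (i : ℕ) + 1 ≤ (i : ℕ) + 1
    omega
  have hfix : ∀ T, T ≠ O i → T ≠ O i' →
      (T ∈ sublevel O' ((i : ℕ) + 1) ↔ T ∈ sublevel O ((i : ℕ) + 1)) := by
    intro T hTA hTB
    have h1 : O.symm T ≠ i := fun h => hTA (by rw [← h, Equiv.apply_symm_apply])
    have h2 : O.symm T ≠ i' := fun h => hTB (by rw [← h, Equiv.apply_symm_apply])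
    simp only [sublevel, mem_filter, mem_univ, true_and, hsymm,
      Equiv.swap_apply_of_ne_of_ne h1 h2]
  -- membership in level surfaces
  have hmemS : ∀ f, f ∈ levelSurf bricksOf O ((i : ℕ) + 1) ↔
      (∃ T ∈ bricksOf f, T ∈ sublevel O ((i : ℕ) + 1)) ∧
      ∃ T ∈ bricksOf f, T ∉ sublevel O ((i : ℕ) + 1) := by
    intro f; simp [levelSurf]
  have hmemS' : ∀ f, f ∈ levelSurf bricksOf O' ((i : ℕ) + 1) ↔
      (∃ T ∈ bricksOf f, T ∈ sublevel O' ((i : ℕ) + 1)) ∧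
      ∃ T ∈ bricksOf f, T ∉ sublevel O' ((i : ℕ) + 1) := by
    intro f; simp [levelSurf]
  -- the per-facet identity
  have key : ∀ f : Facet,
      (if f ∈ levelSurf bricksOf O' ((i : ℕ) + 1) then ω f else 0)
      = (if f ∈ levelSurf bricksOf O ((i : ℕ) + 1) then ω f else 0)
        + ((if f ∈ intFacets bricksOf (O i) \ levelSurf bricksOf O ((i : ℕ) + 1) then ω f else 0)
          - (if f ∈ intFacets bricksOf (O i) ∩ levelSurf bricksOf O ((i : ℕ) + 1) then ω f else 0))
        + ((if f ∈ intFacets bricksOf (O i') \ levelSurf bricksOf O ((i : ℕ) + 1) then ω f else 0)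
          - (if f ∈ intFacets bricksOf (O i') ∩ levelSurf bricksOf O ((i : ℕ) + 1) then ω f else 0))
        + 2 * (if f ∈ commonFacets bricksOf (O i) (O i') then ω f else 0) := by
    intro f
    rcases hBC f with h1 | h2
    · -- boundary facet: one brick only
      obtain ⟨C, hC⟩ := Finset.card_eq_one.mp h1
      have hfS : f ∉ levelSurf bricksOf O ((i : ℕ) + 1) := by
        rw [hmemS]
        rintro ⟨⟨T1, hT1, hm1⟩, ⟨T2, hT2, hm2⟩⟩
        rw [hC, Finset.mem_singleton] at hT1 hT2
        subst hT1; subst hT2; exact hm2 hm1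
      have hfS' : f ∉ levelSurf bricksOf O' ((i : ℕ) + 1) := by
        rw [hmemS']
        rintro ⟨⟨T1, hT1, hm1⟩, ⟨T2, hT2, hm2⟩⟩
        rw [hC, Finset.mem_singleton] at hT1 hT2
        subst hT1; subst hT2; exact hm2 hm1
      have hiA : f ∉ intFacets bricksOf (O i) := by
        simp [intFacets, h1]
      have hiB : f ∉ intFacets bricksOf (O i') := by
        simp [intFacets, h1]
      have hF : f ∉ commonFacets bricksOf (O i) (O i') := by
        simp only [commonFacets, mem_filter, mem_univ, true_and, hC, Finset.mem_singleton, not_and]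
        intro hA' hB'
        exact hAB (hA'.trans hB'.symm)
      simp [hfS, hfS', Finset.mem_sdiff, Finset.mem_inter, hiA, hiB, hF]
    · -- interior facet: two bricks
      by_cases haf : O i ∈ bricksOf f <;> by_cases hbf : O i' ∈ bricksOf f
      · -- f = {A, B}
        have hfS : f ∈ levelSurf bricksOf O ((i : ℕ) + 1) :=
          (hmemS f).mpr ⟨⟨O i, haf, hA_MS⟩, ⟨O i', hbf, hB_MS⟩⟩
        have hfS' : f ∈ levelSurf bricksOf O' ((i : ℕ) + 1) :=
          (hmemS' f).mpr ⟨⟨O i', hbf, hB_MS'⟩, ⟨O i, haf, hA_MS'⟩⟩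
        have hiA : f ∈ intFacets bricksOf (O i) := by
          simp [intFacets, haf, h2]
        have hiB : f ∈ intFacets bricksOf (O i') := by
          simp [intFacets, hbf, h2]
        have hF : f ∈ commonFacets bricksOf (O i) (O i') := by
          simp [commonFacets, haf, hbf]
        simp only [Finset.mem_sdiff, Finset.mem_inter, if_pos hfS', if_pos hfS,
          if_pos (show _ ∧ _ from ⟨hiA, hfS⟩), if_pos (show _ ∧ _ from ⟨hiB, hfS⟩), if_pos hF,
          if_neg (show ¬(f ∈ intFacets bricksOf (O i) ∧
            f ∉ levelSurf bricksOf O ((i : ℕ) + 1)) from fun h => h.2 hfS),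
          if_neg (show ¬(f ∈ intFacets bricksOf (O i') ∧
            f ∉ levelSurf bricksOf O ((i : ℕ) + 1)) from fun h => h.2 hfS)]
        ring
      · -- f = {A, C} with C ∉ {A, B}
        obtain ⟨P, Q, hPQ, hbs⟩ := Finset.card_eq_two.mp h2
        have hCex : ∃ C, C ∈ bricksOf f ∧ C ≠ O i ∧ ∀ T ∈ bricksOf f, T = O i ∨ T = C := by
          rw [hbs] at haf ⊢
          rw [Finset.mem_insert, Finset.mem_singleton] at haf
          rcases haf with h | h
          · exact ⟨Q, by simp, by rw [← h] at hPQ; exact fun hq => hPQ hq.symm, by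
              intro T hT
              rw [Finset.mem_insert, Finset.mem_singleton] at hT
              rcases hT with rfl | rfl
              · exact Or.inl h.symm
              · exact Or.inr rfl⟩
          · exact ⟨P, by simp, by rw [← h] at hPQ; exact fun hq => hPQ hq, by
              intro T hT
              rw [Finset.mem_insert, Finset.mem_singleton] at hT
              rcases hT with rfl | rfl
              · exact Or.inr rfl
              · exact Or.inl h.symm⟩
        obtain ⟨C, hCf, hCA, hall⟩ := hCex
        have hCB : C ≠ O i' := fun h => hbf (h ▸ hCf)
        have hiA : f ∈ intFacets bricksOf (O i) := by
          simp [intFacets, haf, h2]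
        have hiB : f ∉ intFacets bricksOf (O i') := by
          simp [intFacets, hbf]
        have hF : f ∉ commonFacets bricksOf (O i) (O i') := by
          simp [commonFacets, hbf]
        by_cases hc : C ∈ sublevel O ((i : ℕ) + 1)
        · have hfS : f ∉ levelSurf bricksOf O ((i : ℕ) + 1) := by
            rw [hmemS]
            rintro ⟨-, T, hT, hm⟩
            rcases hall T hT with rfl | rfl
            · exact hm hA_MS
            · exact hm hc
          have hfS' : f ∈ levelSurf bricksOf O' ((i : ℕ) + 1) :=
            (hmemS' f).mpr ⟨⟨C, hCf, (hfix C hCA hCB).mpr hc⟩, ⟨O i, haf, hA_MS'⟩⟩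
          simp [Finset.mem_sdiff, Finset.mem_inter, hfS, hfS', hiA, hiB, hF]
        · have hfS : f ∈ levelSurf bricksOf O ((i : ℕ) + 1) :=
            (hmemS f).mpr ⟨⟨O i, haf, hA_MS⟩, ⟨C, hCf, hc⟩⟩
          have hfS' : f ∉ levelSurf bricksOf O' ((i : ℕ) + 1) := by
            rw [hmemS']
            rintro ⟨⟨T, hT, hm⟩, -⟩
            rcases hall T hT with rfl | rfl
            · exact hA_MS' hm
            · exact hc ((hfix _ hCA hCB).mp hm)
          simp [Finset.mem_sdiff, Finset.mem_inter, hfS, hfS', hiA, hiB, hF]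
      · -- f = {B, C} with C ∉ {A, B}
        obtain ⟨P, Q, hPQ, hbs⟩ := Finset.card_eq_two.mp h2
        have hCex : ∃ C, C ∈ bricksOf f ∧ C ≠ O i' ∧ ∀ T ∈ bricksOf f, T = O i' ∨ T = C := by
          rw [hbs] at hbf ⊢
          rw [Finset.mem_insert, Finset.mem_singleton] at hbf
          rcases hbf with h | h
          · exact ⟨Q, by simp, by rw [← h] at hPQ; exact fun hq => hPQ hq.symm, by
              intro T hT
              rw [Finset.mem_insert, Finset.mem_singleton] at hT
              rcases hT with rfl | rfl
              · exact Or.inl h.symm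
              · exact Or.inr rfl⟩
          · exact ⟨P, by simp, by rw [← h] at hPQ; exact fun hq => hPQ hq, by
              intro T hT
              rw [Finset.mem_insert, Finset.mem_singleton] at hT
              rcases hT with rfl | rfl
              · exact Or.inr rfl
              · exact Or.inl h.symm⟩
        obtain ⟨C, hCf, hCB, hall⟩ := hCex
        have hCA : C ≠ O i := fun h => haf (h ▸ hCf)
        have hiA : f ∉ intFacets bricksOf (O i) := by
          simp [intFacets, haf]
        have hiB : f ∈ intFacets bricksOf (O i') := by
          simp [intFacets, hbf, h2]
        have hF : f ∉ commonFacets bricksOf (O i) (O i') := by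
          simp [commonFacets, haf]
        by_cases hc : C ∈ sublevel O ((i : ℕ) + 1)
        · have hfS : f ∈ levelSurf bricksOf O ((i : ℕ) + 1) :=
            (hmemS f).mpr ⟨⟨C, hCf, hc⟩, ⟨O i', hbf, hB_MS⟩⟩
          have hfS' : f ∉ levelSurf bricksOf O' ((i : ℕ) + 1) := by
            rw [hmemS']
            rintro ⟨-, T, hT, hm⟩
            rcases hall T hT with rfl | rfl
            · exact hm hB_MS'
            · exact hm ((hfix _ hCA hCB).mpr hc)
          simp [Finset.mem_sdiff, Finset.mem_inter, hfS, hfS', hiA, hiB, hF]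
        · have hfS : f ∉ levelSurf bricksOf O ((i : ℕ) + 1) := by
            rw [hmemS]
            rintro ⟨⟨T, hT, hm⟩, -⟩
            rcases hall T hT with rfl | rfl
            · exact hB_MS hm
            · exact hc hm
          have hfS' : f ∈ levelSurf bricksOf O' ((i : ℕ) + 1) := by
            refine (hmemS' f).mpr ⟨⟨O i', hbf, hB_MS'⟩, ⟨C, hCf, ?_⟩⟩
            intro hm; exact hc ((hfix _ hCA hCB).mp hm)
          simp [Finset.mem_sdiff, Finset.mem_inter, hfS, hfS', hiA, hiB, hF]
      · -- f avoids both A and B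
        have hSS' : (f ∈ levelSurf bricksOf O' ((i : ℕ) + 1)) ↔
            f ∈ levelSurf bricksOf O ((i : ℕ) + 1) := by
          rw [hmemS, hmemS']
          have hfx : ∀ T ∈ bricksOf f,
              (T ∈ sublevel O' ((i : ℕ) + 1) ↔ T ∈ sublevel O ((i : ℕ) + 1)) := by
            intro T hT
            exact hfix T (fun h => haf (h ▸ hT)) (fun h => hbf (h ▸ hT))
          constructor <;> rintro ⟨⟨T1, hT1, hm1⟩, ⟨T2, hT2, hm2⟩⟩
          · exact ⟨⟨T1, hT1, (hfx T1 hT1).mp hm1⟩, ⟨T2, hT2, fun h => hm2 ((hfx T2 hT2).mpr h)⟩⟩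
          · exact ⟨⟨T1, hT1, (hfx T1 hT1).mpr hm1⟩, ⟨T2, hT2, fun h => hm2 ((hfx T2 hT2).mp h)⟩⟩
        have hiA : f ∉ intFacets bricksOf (O i) := by
          simp [intFacets, haf]
        have hiB : f ∉ intFacets bricksOf (O i') := by
          simp [intFacets, hbf]
        have hF : f ∉ commonFacets bricksOf (O i) (O i') := by
          simp [commonFacets, haf]
        by_cases hfS : f ∈ levelSurf bricksOf O ((i : ℕ) + 1) <;>
          simp [Finset.mem_sdiff, Finset.mem_inter, hSS', hfS, hiA, hiB, hF]
  -- sum the per-facet identity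
  have expand : ∀ t : Finset Facet, wt ω t = ∑ f : Facet, if f ∈ t then ω f else 0 := by
    intro t
    have h := Finset.sum_ite_mem (univ : Finset Facet) t ω
    rw [Finset.univ_inter] at h
    rw [wt, ← h]
  simp only [Lam, strength, expand, Finset.mul_sum, ← Finset.sum_sub_distrib,
    ← Finset.sum_add_distrib]
  exact Finset.sum_congr rfl fun f _ => key f
end

section
/- (Delaying Lemma, key inequality) Let O be an ordering with level surfaces S_j, let i < j, A = T_i, B = T_{i+1}, and F = ∂A ⊓ ∂B. If ω(∂A ⊓ S_j) > ω(∂_I A \ (∂A ⊓ S_j)), then σ(A;S_{i−1}) − 2ω(F) > 0; in particular σ(A;S_{i−1}) > 0 and σ(A;S'_i) > 0, where S'_i is the level surface at height i after swapping A and B. -/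
open Finset

set_option maxHeartbeats 1000000 in
/-- Delaying Lemma, key inequality: let A = T_i be the brick at height i
and B = T_{i+1}, with i < j ≤ N and F = ∂A ⊓ ∂B.  If ω(∂A ⊓ S_j) > ω(∂_I A \ (∂A ⊓ S_j)),
then σ(A;S_{i−1}) − 2ω(F) > 0; in particular σ(A;S_{i−1}) > 0 and σ(A;S'_i) > 0, where
S'_i is the level surface at height i after swapping A and B. -/
theorem stmt10 {Brick Facet : Type} [Fintype Brick] [DecidableEq Brick]
    [Fintype Facet] [DecidableEq Facet]
    (ω : Facet → ℝ) (hω : ∀ f, 0 ≤ ω f)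
    (bricksOf : Facet → Finset Brick)
    (hBC : ∀ f, (bricksOf f).card = 1 ∨ (bricksOf f).card = 2)
    {N : ℕ} (O : Fin N ≃ Brick) (i j : ℕ) (h1 : 1 ≤ i) (hij : i < j) (hjN : j ≤ N)
    (A B : Brick) (hA : A = O ⟨i - 1, by omega⟩) (hB : B = O ⟨i, by omega⟩)
    (O' : Fin N ≃ Brick)
    (hO' : O' = (Equiv.swap (⟨i - 1, by omega⟩ : Fin N) ⟨i, by omega⟩).trans O)
    (hdag : wt ω (intFacets bricksOf A ∩ levelSurf bricksOf O j)
      > wt ω (intFacets bricksOf A \ (intFacets bricksOf A ∩ levelSurf bricksOf O j))) :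
    strength ω (intFacets bricksOf A) (levelSurf bricksOf O (i - 1))
        - 2 * wt ω (commonFacets bricksOf A B) > 0 ∧
    strength ω (intFacets bricksOf A) (levelSurf bricksOf O (i - 1)) > 0 ∧
    strength ω (intFacets bricksOf A) (levelSurf bricksOf O' i) > 0 := by
  have hAB : A ≠ B := by
    rw [hA, hB]
    intro h
    have h2 := O.injective h
    have h3 : i - 1 = i := congrArg Fin.val h2
    omega
  have hsymA : O.symm A = ⟨i - 1, by omega⟩ := by rw [hA]; simp
  have hsymB : O.symm B = ⟨i, by omega⟩ := by rw [hB]; simp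
  have hidxA : ((O.symm A : Fin N) : ℕ) = i - 1 := by rw [hsymA]
  have hidxB : ((O.symm B : Fin N) : ℕ) = i := by rw [hsymB]
  have hmem : ∀ (P : Fin N ≃ Brick) (T : Brick) (k : ℕ),
      T ∈ sublevel P k ↔ ((P.symm T : Fin N) : ℕ) + 1 ≤ k := by
    intro P T k; simp [sublevel]
  have hO'symm : ∀ T, O'.symm T
      = Equiv.swap (⟨i - 1, by omega⟩ : Fin N) ⟨i, by omega⟩ (O.symm T) := by
    intro T; rw [hO']; simp
  have hidx'A : ((O'.symm A : Fin N) : ℕ) = i := by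
    simp only [hO'symm, hsymA, Equiv.swap_apply_left]
  obtain ⟨IA, hIAdef⟩ : ∃ s, s = intFacets bricksOf A := ⟨_, rfl⟩
  obtain ⟨S1, hS1def⟩ : ∃ s, s = levelSurf bricksOf O (i - 1) := ⟨_, rfl⟩
  obtain ⟨Sj, hSjdef⟩ : ∃ s, s = levelSurf bricksOf O j := ⟨_, rfl⟩
  obtain ⟨S', hS'def⟩ : ∃ s, s = levelSurf bricksOf O' i := ⟨_, rfl⟩
  obtain ⟨F, hFdef⟩ : ∃ s, s = commonFacets bricksOf A B := ⟨_, rfl⟩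
  rw [← hIAdef, ← hSjdef] at hdag
  rw [← hIAdef, ← hS1def, ← hS'def, ← hFdef]
  have hFsub : F ⊆ IA := by
    intro f hf
    simp only [hFdef, commonFacets, mem_filter, mem_univ, true_and] at hf
    simp only [hIAdef, intFacets, mem_filter, mem_univ, true_and]
    refine ⟨hf.1, ?_⟩
    rcases hBC f with h | h
    · exact absurd (Finset.card_le_one.mp h.le A hf.1 B hf.2) hAB
    · exact h
  have master : ∀ f ∈ IA,
      (f ∈ S1 → f ∉ Sj) ∧ (f ∈ F → f ∉ Sj) ∧ (f ∈ S1 → f ∉ F) ∧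
      (f ∈ S' ↔ (f ∈ S1 ∨ f ∈ F)) := by
    intro f hf
    simp only [hIAdef, intFacets, mem_filter, mem_univ, true_and] at hf
    obtain ⟨hAf, hcard⟩ := hf
    obtain ⟨x, y, hxy, hset⟩ := Finset.card_eq_two.mp hcard
    obtain ⟨C, hACne, hfC⟩ : ∃ C, A ≠ C ∧ bricksOf f = {A, C} := by
      rw [hset] at hAf
      rcases Finset.mem_insert.mp hAf with h | h
      · exact ⟨y, by rw [h]; exact hxy, by rw [hset, h]⟩
      · have h' := Finset.mem_singleton.mp h
        exact ⟨x, by rw [h']; exact hxy.symm, by rw [hset, h', Finset.pair_comm]⟩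
    obtain ⟨c, hc⟩ : ∃ c, ((O.symm C : Fin N) : ℕ) = c := ⟨_, rfl⟩
    have hcN : c < N := hc ▸ (O.symm C).isLt
    have hcne : c ≠ i - 1 := by
      intro h
      exact hACne (O.symm.injective (Fin.ext (hidxA.trans (h.symm.trans hc.symm))))
    have hlev : ∀ (P : Fin N ≃ Brick) (k : ℕ), f ∈ levelSurf bricksOf P k ↔
        ((((P.symm A : Fin N) : ℕ) + 1 ≤ k ∨ ((P.symm C : Fin N) : ℕ) + 1 ≤ k) ∧
         (¬(((P.symm A : Fin N) : ℕ) + 1 ≤ k) ∨ ¬(((P.symm C : Fin N) : ℕ) + 1 ≤ k))) := by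
      intro P k
      simp only [levelSurf, mem_filter, mem_univ, true_and, hfC, Finset.mem_insert,
        Finset.mem_singleton, hmem]
      constructor
      · rintro ⟨⟨T, (rfl | rfl), hT⟩, ⟨T', (rfl | rfl), hT'⟩⟩ <;> tauto
      · rintro ⟨h1, h2⟩
        constructor
        · rcases h1 with h | h
          · exact ⟨A, Or.inl rfl, h⟩
          · exact ⟨C, Or.inr rfl, h⟩
        · rcases h2 with h | h
          · exact ⟨A, Or.inl rfl, h⟩
          · exact ⟨C, Or.inr rfl, h⟩
    have hS1c : f ∈ S1 ↔ c + 1 ≤ i - 1 := by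
      rw [hS1def, hlev, hidxA, hc]; omega
    have hSjc : f ∈ Sj ↔ ¬ (c + 1 ≤ j) := by
      rw [hSjdef, hlev, hidxA, hc]; omega
    have hFc : f ∈ F ↔ c = i := by
      rw [hFdef]
      simp only [commonFacets, mem_filter, mem_univ, true_and]
      constructor
      · rintro ⟨-, hBf⟩
        rw [hfC] at hBf
        rcases Finset.mem_insert.mp hBf with h | h
        · exact absurd h.symm hAB
        · exact hc.symm.trans ((congrArg (fun T => ((O.symm T : Fin N) : ℕ))
            (Finset.mem_singleton.mp h).symm).trans hidxB)
      · intro h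
        have hBCeq : B = C :=
          O.symm.injective (Fin.ext (hidxB.trans (h.symm.trans hc.symm)))
        refine ⟨hAf, ?_⟩
        rw [hfC, hBCeq]
        exact Finset.mem_insert_of_mem (Finset.mem_singleton_self _)
    have hidx'C : ((O'.symm C : Fin N) : ℕ) = if c = i then i - 1 else c := by
      by_cases h : c = i
      · have hCi : O.symm C = ⟨i, by omega⟩ := Fin.ext (hc.trans h)
        simp only [hO'symm, hCi, Equiv.swap_apply_right, if_pos h]
      · have hne1 : O.symm C ≠ ⟨i - 1, by omega⟩ := fun hh =>
          hcne (hc.symm.trans (congrArg Fin.val hh))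
        have hne2 : O.symm C ≠ ⟨i, by omega⟩ := fun hh =>
          h (hc.symm.trans (congrArg Fin.val hh))
        simp only [hO'symm, Equiv.swap_apply_of_ne_of_ne hne1 hne2, if_neg h, hc]
    have hS'c : f ∈ S' ↔ (c = i ∨ c + 1 ≤ i - 1) := by
      rw [hS'def, hlev, hidx'A, hidx'C]
      by_cases h : c = i
      · rw [if_pos h]; omega
      · rw [if_neg h]; omega
    rw [hS1c, hSjc, hFc, hS'c]
    refine ⟨by omega, by omega, by omega, by omega⟩
  -- set identities
  have hd1 : Disjoint (IA ∩ S1) F := by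
    rw [Finset.disjoint_left]
    intro f hf hfF
    have hm := master f (Finset.mem_inter.mp hf).1
    exact hm.2.2.1 (Finset.mem_inter.mp hf).2 hfF
  have hd2 : Disjoint (IA ∩ Sj) F := by
    rw [Finset.disjoint_left]
    intro f hf hfF
    have hm := master f (Finset.mem_inter.mp hf).1
    exact hm.2.1 hfF (Finset.mem_inter.mp hf).2
  have hu1 : (IA ∩ S1) ∪ F ⊆ IA \ Sj := by
    intro f hf
    rcases Finset.mem_union.mp hf with h | h
    · have hm := master f (Finset.mem_inter.mp h).1
      exact Finset.mem_sdiff.mpr ⟨(Finset.mem_inter.mp h).1, hm.1 (Finset.mem_inter.mp h).2⟩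
    · exact Finset.mem_sdiff.mpr ⟨hFsub h, (master f (hFsub h)).2.1 h⟩
  have hu2 : (IA ∩ Sj) ∪ F ⊆ IA \ S1 := by
    intro f hf
    rcases Finset.mem_union.mp hf with h | h
    · have hm := master f (Finset.mem_inter.mp h).1
      refine Finset.mem_sdiff.mpr ⟨(Finset.mem_inter.mp h).1, fun hS => ?_⟩
      exact hm.1 hS (Finset.mem_inter.mp h).2
    · refine Finset.mem_sdiff.mpr ⟨hFsub h, fun hS => ?_⟩
      exact (master f (hFsub h)).2.2.1 hS h
  have hFsub1 : F ⊆ IA \ S1 := fun f hf => hu2 (Finset.mem_union_right _ hf)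
  have hE : IA ∩ S' = (IA ∩ S1) ∪ F := by
    ext f
    simp only [Finset.mem_inter, Finset.mem_union]
    constructor
    · rintro ⟨hfI, hfS⟩
      rcases (master f hfI).2.2.2.mp hfS with h | h
      · exact Or.inl ⟨hfI, h⟩
      · exact Or.inr h
    · rintro (⟨hfI, h⟩ | h)
      · exact ⟨hfI, (master f hfI).2.2.2.mpr (Or.inl h)⟩
      · exact ⟨hFsub h, (master f (hFsub h)).2.2.2.mpr (Or.inr h)⟩
  have hE2 : IA \ S' = (IA \ S1) \ F := by
    ext f
    simp only [Finset.mem_sdiff]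
    constructor
    · rintro ⟨hfI, hfS⟩
      exact ⟨⟨hfI, fun h => hfS ((master f hfI).2.2.2.mpr (Or.inl h))⟩,
        fun h => hfS ((master f hfI).2.2.2.mpr (Or.inr h))⟩
    · rintro ⟨⟨hfI, h1⟩, h2⟩
      refine ⟨hfI, fun h => ?_⟩
      rcases (master f hfI).2.2.2.mp h with h | h
      · exact h1 h
      · exact h2 h
  -- arithmetic
  have hwtnn : ∀ s : Finset Facet, 0 ≤ wt ω s := fun s => Finset.sum_nonneg fun f _ => hω f
  have hmono : ∀ {s t : Finset Facet}, s ⊆ t → wt ω s ≤ wt ω t := fun h =>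
    Finset.sum_le_sum_of_subset_of_nonneg h fun f _ _ => hω f
  have key1 : wt ω (IA ∩ S1) + wt ω F ≤ wt ω (IA \ Sj) := by
    have h := hmono hu1
    rwa [show wt ω ((IA ∩ S1) ∪ F) = wt ω (IA ∩ S1) + wt ω F from Finset.sum_union hd1] at h
  have key2 : wt ω (IA ∩ Sj) + wt ω F ≤ wt ω (IA \ S1) := by
    have h := hmono hu2
    rwa [show wt ω ((IA ∩ Sj) ∪ F) = wt ω (IA ∩ Sj) + wt ω F from Finset.sum_union hd2] at h
  have hs'int : wt ω (IA ∩ S') = wt ω (IA ∩ S1) + wt ω F := by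
    rw [hE]; exact Finset.sum_union hd1
  have hs'diff : wt ω (IA \ S') + wt ω F = wt ω (IA \ S1) := by
    rw [hE2]; exact Finset.sum_sdiff hFsub1
  have h2dag : wt ω (IA ∩ Sj) > wt ω (IA \ Sj) := by
    rwa [Finset.sdiff_inter_self_left] at hdag
  have hFnn := hwtnn F
  simp only [strength]
  refine ⟨by linarith, by linarith, by linarith⟩
end

section
/- Let O be a locally thin ordering of a weighted brick complex M. If k is a minimum of O, then the level surface S_k is a stable minimal surface, i.e., S_k admits no strict shortening move. -/
open Finset

/-- `t` is a (local) maximum of the ordering with level-weight function Λ. -/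
def IsMaxAt (N : ℕ) (Λ : ℕ → ℝ) (t : ℕ) : Prop :=
  ∃ tm tp : ℕ, tm < t ∧ t < tp ∧ tp ≤ N ∧
    Λ tm < Λ (tm + 1) ∧ Λ tp < Λ (tp - 1) ∧
    ∀ k, tm < k → k < tp → Λ k = Λ t

open Classical in
/-- The width Ω of an ordering: the values of Λ at its maxima, arranged in
non-increasing order. -/
noncomputable def widthList (N : ℕ) (Λ : ℕ → ℝ) : List ℝ :=
  ((((Finset.range (N + 1)).filter (fun t => IsMaxAt N Λ t)).val.map Λ).sort (· ≤ ·)).reverse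

/-- Strict lexicographic comparison of widths. -/
def WidthLT (l₁ l₂ : List ℝ) : Prop := List.Lex (· < ·) l₁ l₂

/-- Lexicographic comparison of widths. -/
def WidthLE (l₁ l₂ : List ℝ) : Prop := WidthLT l₁ l₂ ∨ l₁ = l₂

/-- A single legal swap: O' is obtained from O by interchanging the bricks at heights
i and i+1, without increasing width. -/
def ThinStep {Brick Facet : Type} [Fintype Brick] [DecidableEq Brick]
    [Fintype Facet] [DecidableEq Facet]
    (ω : Facet → ℝ) (bricksOf : Facet → Finset Brick) {N : ℕ}
    (O O' : Fin N ≃ Brick) : Prop :=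
  (∃ (i : Fin N) (hi : (i : ℕ) + 1 < N),
    O' = (Equiv.swap i ⟨(i : ℕ) + 1, hi⟩).trans O) ∧
  WidthLE (widthList N (Lam ω bricksOf O')) (widthList N (Lam ω bricksOf O))

/-- `O` thins to `O'`: a sequence of width-non-increasing adjacent swaps leads from O to O'. -/
def ThinsTo {Brick Facet : Type} [Fintype Brick] [DecidableEq Brick]
    [Fintype Facet] [DecidableEq Facet]
    (ω : Facet → ℝ) (bricksOf : Facet → Finset Brick) {N : ℕ}
    (O O' : Fin N ≃ Brick) : Prop :=
  Relation.ReflTransGen (ThinStep ω bricksOf) O O'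

/-- `O` is locally thin: it does not thin to any ordering of strictly smaller width. -/
def LocallyThin {Brick Facet : Type} [Fintype Brick] [DecidableEq Brick]
    [Fintype Facet] [DecidableEq Facet]
    (ω : Facet → ℝ) (bricksOf : Facet → Finset Brick) {N : ℕ}
    (O : Fin N ≃ Brick) : Prop :=
  ∀ O' : Fin N ≃ Brick, ThinsTo ω bricksOf O O' →
    ¬ WidthLT (widthList N (Lam ω bricksOf O')) (widthList N (Lam ω bricksOf O))

/-- `t` is a (local) minimum of the ordering with level-weight function Λ. -/
def IsMinAt (N : ℕ) (Λ : ℕ → ℝ) (t : ℕ) : Prop :=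
  ∃ tm tp : ℕ, tm < t ∧ t < tp ∧ tp ≤ N ∧
    Λ (tm + 1) < Λ tm ∧ Λ (tp - 1) < Λ tp ∧
    ∀ k, tm < k → k < tp → Λ k = Λ t

/-- `S` is a stable minimal surface: it admits no strict shortening move. -/
def StableMin {Brick Facet : Type} [DecidableEq Brick] [Fintype Facet] [DecidableEq Facet]
    (ω : Facet → ℝ) (bricksOf : Facet → Finset Brick) (S : Finset Facet) : Prop :=
  ∀ A : Brick, ¬ StrictShort ω (intFacets bricksOf A) S

/-- `S` is an unstable minimal surface (Definition 2.8): the bricks partition into two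
nonempty sets 𝒜, ℬ such that (1) all facets common to bricks on opposite sides lie in S;
(2) each side contains a shortening move and some side a strict one; (3) every strict
shortening move on one side is balanced by a shortening move on the other with
2ω(∂A ⊓ ∂B) ≥ |σ(A;S)| + |σ(B;S)|; and (4) this inequality holds for every pair of strict
shortening moves on opposite sides. -/
def UnstableMin {Brick Facet : Type} [Fintype Brick] [DecidableEq Brick]
    [Fintype Facet] [DecidableEq Facet]
    (ω : Facet → ℝ) (bricksOf : Facet → Finset Brick) (S : Finset Facet) : Prop :=
  ∃ 𝒜 ℬ : Finset Brick, 𝒜.Nonempty ∧ ℬ.Nonempty ∧ 𝒜 ∩ ℬ = ∅ ∧ 𝒜 ∪ ℬ = univ ∧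
    (∀ A ∈ 𝒜, ∀ B ∈ ℬ, commonFacets bricksOf A B ⊆ S) ∧
    (∃ A ∈ 𝒜, ShortMove ω (intFacets bricksOf A) S) ∧
    (∃ B ∈ ℬ, ShortMove ω (intFacets bricksOf B) S) ∧
    ((∃ A ∈ 𝒜, StrictShort ω (intFacets bricksOf A) S) ∨
     (∃ B ∈ ℬ, StrictShort ω (intFacets bricksOf B) S)) ∧
    (∀ A ∈ 𝒜, StrictShort ω (intFacets bricksOf A) S →
      ∃ B ∈ ℬ, ShortMove ω (intFacets bricksOf B) S ∧
        2 * wt ω (commonFacets bricksOf A B) ≥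
          |strength ω (intFacets bricksOf A) S| + |strength ω (intFacets bricksOf B) S|) ∧
    (∀ B ∈ ℬ, StrictShort ω (intFacets bricksOf B) S →
      ∃ A ∈ 𝒜, ShortMove ω (intFacets bricksOf A) S ∧
        2 * wt ω (commonFacets bricksOf A B) ≥
          |strength ω (intFacets bricksOf A) S| + |strength ω (intFacets bricksOf B) S|) ∧
    (∀ A ∈ 𝒜, ∀ B ∈ ℬ, StrictShort ω (intFacets bricksOf A) S →
      StrictShort ω (intFacets bricksOf B) S →
        2 * wt ω (commonFacets bricksOf A B) ≥
          |strength ω (intFacets bricksOf A) S| + |strength ω (intFacets bricksOf B) S|)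

/-!
Suppose a brick `A` had σ(A; S_k) < 0; reversing the ordering if necessary, `A` lies at some
height `p + 1 ≤ k`. Removing `A` from `M_j` changes the weight of the level surface by σ(A; S_j),
which grows with `j` and so stays negative up to `j = k`. Moving `A` up one step from height `h`
replaces Λ(h) by Λ(h + 1) + σ(A; S_(h+1)), while Λ(h - 1) = Λ(h) + σ(A; S_h): such a change creates
no new maximum, so `A` can be carried up to height `k` by thinning steps. In the resulting ordering
Λ(j) is replaced on `(p, k)` by Λ(j + 1) + σ(A; S_(j+1)), strictly below the maximum `M` of Λ on
`[p + 1, k]`, while Λ(p) and Λ(k) lie below `M` (the latter because `k` is a minimum). So a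
maximum of value `M` disappears and none of value `≥ M` appears: the width drops, contradicting
local thinness.
-/

namespace LocallyThinOrdering

noncomputable def sortDesc (m : Multiset ℝ) : List ℝ := (m.sort (· ≤ ·)).reverse

lemma coe_sortDesc (m : Multiset ℝ) : ((sortDesc m : List ℝ) : Multiset ℝ) = m := by
  rw [sortDesc, Multiset.coe_reverse, Multiset.sort_eq]

lemma sortDesc_zero : sortDesc 0 = [] := by
  rw [sortDesc, Multiset.sort_zero, List.reverse_nil]

lemma pairwise_sortDesc (m : Multiset ℝ) : (sortDesc m).Pairwise (· ≥ ·) :=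
  List.pairwise_reverse.2 (Multiset.pairwise_sort m _)

lemma sortDesc_eq_of_pairwise {m : Multiset ℝ} {l : List ℝ} (hl : l.Pairwise (· ≥ ·))
    (hm : (l : Multiset ℝ) = m) : sortDesc m = l :=
  List.Perm.eq_of_pairwise (fun _ _ _ _ hab hba => le_antisymm hba hab) (pairwise_sortDesc m) hl
    (Multiset.coe_eq_coe.1 (by rw [coe_sortDesc, hm]))

lemma exists_sortDesc_eq_cons {m : Multiset ℝ} (hm : m ≠ 0) :
    ∃ a ∈ m, (∀ x ∈ m, x ≤ a) ∧ sortDesc m = a :: sortDesc (m.erase a) := by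
  obtain ⟨a, l, hal⟩ : ∃ a l, sortDesc m = a :: l := by
    cases h : sortDesc m with
    | nil => exact absurd (by rw [← coe_sortDesc m, h]; rfl) hm
    | cons a l => exact ⟨a, l, rfl⟩
  have hcons : a ::ₘ (l : Multiset ℝ) = m := by rw [Multiset.cons_coe, ← hal, coe_sortDesc]
  have hsorted := pairwise_sortDesc m
  rw [hal, List.pairwise_cons] at hsorted
  refine ⟨a, hcons ▸ Multiset.mem_cons_self a _, fun x hx => ?_, ?_⟩
  · rw [← hcons, Multiset.mem_cons] at hx
    exact hx.elim le_of_eq (hsorted.1 x ∘ Multiset.mem_coe.1)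
  · rw [hal, sortDesc_eq_of_pairwise hsorted.2 (by rw [← hcons, Multiset.erase_cons_head])]

lemma widthLT_sortDesc_add {R R' : Multiset ℝ} {M : ℝ} (hM : M ∈ R)
    (hR' : ∀ x ∈ R', x < M) (C : Multiset ℝ) : WidthLT (sortDesc (C + R')) (sortDesc (C + R)) := by
  induction C using Multiset.strongInductionOn with
  | ih C ih =>
    have hMR : M ∈ C + R := Multiset.mem_add.2 (Or.inr hM)
    obtain ⟨b, -, hbmax, hdb⟩ := exists_sortDesc_eq_cons (fun h : C + R = 0 => by simp [h] at hMR)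
    rcases eq_or_ne (C + R') 0 with h0 | h0
    · rw [h0, sortDesc_zero, hdb]
      exact List.Lex.nil
    obtain ⟨a, ha, -, hda⟩ := exists_sortDesc_eq_cons h0
    rw [hda, hdb]
    rcases (Multiset.mem_add.1 ha).imp_right (hR' a) with haC | haM
    · rcases (hbmax a (Multiset.mem_add.2 (Or.inl haC))).lt_or_eq with hab | rfl
      · exact List.Lex.rel hab
      · rw [Multiset.erase_add_left_pos _ haC, Multiset.erase_add_left_pos _ haC]
        exact List.Lex.cons (ih _ (Multiset.erase_lt.2 haC))
    · exact List.Lex.rel (haM.trans_le (hbmax M hMR))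

lemma widthLE_sortDesc_of_le {m m' : Multiset ℝ} (h : m ≤ m') :
    WidthLE (sortDesc m) (sortDesc m') := by
  obtain ⟨D, rfl⟩ := Multiset.le_iff_exists_add.1 h
  rcases eq_or_ne D 0 with rfl | hD
  · exact Or.inr (by rw [add_zero])
  obtain ⟨M, hM⟩ := Multiset.exists_mem_of_ne_zero hD
  have := widthLT_sortDesc_add hM (R' := 0) (by simp) m
  rw [add_zero] at this
  exact Or.inl this

section Maxima

variable {N : ℕ} {Λ Λ' : ℕ → ℝ} {t : ℕ}

-- `open Classical` makes the filter below literally the one in `widthList`.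
open Classical in
noncomputable def maxValues (N : ℕ) (Λ : ℕ → ℝ) : Multiset ℝ :=
  ((range (N + 1)).filter (fun t => IsMaxAt N Λ t)).val.map Λ

lemma widthList_eq_sortDesc (N : ℕ) (Λ : ℕ → ℝ) : widthList N Λ = sortDesc (maxValues N Λ) := rfl

lemma _root_.IsMaxAt.le (ht : IsMaxAt N Λ t) : t ≤ N := by
  obtain ⟨_, _, _, _, _, _, _, _⟩ := ht
  omega

lemma isMaxAt_iff_plateau : IsMaxAt N Λ t ↔ ∃ tm tp, tm < t ∧ t < tp ∧ tp ≤ N ∧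
    Λ tm < Λ t ∧ Λ tp < Λ t ∧ ∀ j, tm < j → j < tp → Λ j = Λ t := by
  constructor
  · rintro ⟨tm, tp, htm, htp, hN, hlo, hhi, hplat⟩
    refine ⟨tm, tp, htm, htp, hN, ?_, ?_, hplat⟩
    · rwa [← hplat (tm + 1) (by omega) (by omega)]
    · rwa [← hplat (tp - 1) (by omega) (by omega)]
  · rintro ⟨tm, tp, htm, htp, hN, hlo, hhi, hplat⟩
    refine ⟨tm, tp, htm, htp, hN, ?_, ?_, hplat⟩
    · rwa [hplat (tm + 1) (by omega) (by omega)]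
    · rwa [hplat (tp - 1) (by omega) (by omega)]

lemma isMaxAt_congr (h : ∀ j ≤ N, Λ j = Λ' j) : IsMaxAt N Λ t ↔ IsMaxAt N Λ' t := by
  suffices ∀ {Λ Λ' : ℕ → ℝ}, (∀ j ≤ N, Λ j = Λ' j) → IsMaxAt N Λ t → IsMaxAt N Λ' t from
    ⟨this h, this fun j hj => (h j hj).symm⟩
  intro Λ Λ' h ⟨tm, tp, htm, htp, hN, hlo, hhi, hplat⟩
  refine ⟨tm, tp, htm, htp, hN, ?_, ?_, fun j hj hj' => ?_⟩
  · rwa [← h tm (by omega), ← h (tm + 1) (by omega)]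
  · rwa [← h tp (by omega), ← h (tp - 1) (by omega)]
  · rw [← h j (by omega), ← h t (by omega)]
    exact hplat j hj hj'

/-- The plateau around `t` is cut out by the nearest points on either side where `Λ` takes
another value. -/
lemma isMaxAt_of_bounds {c d : ℕ} (hct : c < t) (htd : t < d) (hdN : d ≤ N)
    (hc : Λ c < Λ t) (hd : Λ d < Λ t) (hle : ∀ j, c < j → j < d → Λ j ≤ Λ t) :
    IsMaxAt N Λ t := by
  classical
  have hlt : ∀ j, c ≤ j → j ≤ d → Λ j ≠ Λ t → Λ j < Λ t := by
    intro j hcj hjd hne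
    rcases hcj.eq_or_lt with rfl | hcj
    · exact hc
    rcases hjd.eq_or_lt with rfl | hjd
    · exact hd
    exact (hle j hcj hjd).lt_of_ne hne
  set tm := Nat.findGreatest (fun j => Λ j ≠ Λ t) t
  have hex : ∃ j, t < j ∧ Λ j ≠ Λ t := ⟨d, htd, hd.ne⟩
  set tp := Nat.find hex
  have hctm : c ≤ tm := Nat.le_findGreatest hct.le hc.ne
  have htm : Λ tm ≠ Λ t := Nat.findGreatest_spec (P := fun j => Λ j ≠ Λ t) hct.le hc.ne
  have htm_le : tm ≤ t := Nat.findGreatest_le t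
  obtain ⟨htp, htpne⟩ : t < tp ∧ Λ tp ≠ Λ t := Nat.find_spec hex
  have htpd : tp ≤ d := Nat.find_min' hex ⟨htd, hd.ne⟩
  refine isMaxAt_iff_plateau.2 ⟨tm, tp, htm_le.lt_of_ne fun h => htm (congrArg Λ h), htp,
    by omega, hlt tm hctm (by omega) htm, hlt tp (by omega) htpd htpne, fun j hj hj' => ?_⟩
  rcases le_or_gt j t with hjt | hjt
  · exact not_not.1 (Nat.findGreatest_is_greatest hj hjt)
  · exact not_not.1 fun hne => Nat.find_min hex hj' ⟨hjt, hne⟩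

lemma _root_.IsMaxAt.of_eq_outside {c d : ℕ} (hout : ∀ j, j ≤ c ∨ d ≤ j → Λ' j = Λ j)
    (hlow : ∀ j, c ≤ j → j ≤ d → Λ j < Λ t) (ht : IsMaxAt N Λ t) :
    IsMaxAt N Λ' t ∧ Λ' t = Λ t := by
  obtain ⟨tm, tp, htm, htp, hN, hlo, hhi, hplat⟩ := isMaxAt_iff_plateau.1 ht
  have havoid : ∀ j, tm ≤ j → j ≤ tp → Λ' j = Λ j := by
    refine fun j hj hj' => hout j ?_
    by_contra! hcjd
    rcases lt_or_ge t c with htc | hct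
    · exact (hlow c le_rfl (by omega)).ne (hplat c (by omega) (by omega))
    rcases lt_or_ge d t with hdt | htd
    · exact (hlow d (by omega) le_rfl).ne (hplat d (by omega) (by omega))
    · exact lt_irrefl _ (hlow t hct htd)
  have hteq := havoid t htm.le htp.le
  refine ⟨isMaxAt_iff_plateau.2 ⟨tm, tp, htm, htp, hN, ?_, ?_, fun j hj hj' => ?_⟩, hteq⟩
  · rwa [havoid tm le_rfl (by omega), hteq]
  · rwa [havoid tp (by omega) le_rfl, hteq]
  · rw [havoid j hj.le hj'.le, hteq]
    exact hplat j hj hj'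

lemma _root_.IsMaxAt.of_update {h₀ : ℕ} (hoff : ∀ j, j ≠ h₀ → Λ' j = Λ j)
    (hL : Λ (h₀ - 1) ≤ Λ' h₀) (hLx : Λ (h₀ - 1) < Λ h₀) (hxR : Λ h₀ ≤ Λ (h₀ + 1))
    (hyR : Λ' h₀ < Λ (h₀ + 1)) (ht : IsMaxAt N Λ' t) : IsMaxAt N Λ t ∧ Λ t = Λ' t := by
  have h₀pos : h₀ ≠ 0 := by rintro rfl; exact lt_irrefl _ hLx
  obtain ⟨tm, tp, htm, htp, hN, hlo, hhi, hplat⟩ := isMaxAt_iff_plateau.1 ht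
  have hR : Λ' (h₀ + 1) = Λ (h₀ + 1) := hoff _ (by omega)
  have hnotin : ¬ (tm < h₀ ∧ h₀ < tp) := by
    rintro ⟨h1, h2⟩
    have hRle : Λ' (h₀ + 1) ≤ Λ' t := by
      rcases (show h₀ + 1 ≤ tp by omega).lt_or_eq with h3 | h3
      · exact (hplat _ (by omega) h3).le
      · exact h3 ▸ hhi.le
    linarith [hplat h₀ h1 h2]
  have htph₀ : tp ≠ h₀ := by
    rintro rfl
    have := hplat (tp - 1) (by omega) (by omega)
    rw [hoff _ (by omega)] at this
    linarith
  have hteq : Λ t = Λ' t := (hoff t (by omega)).symm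
  refine ⟨?_, hteq⟩
  by_cases htmh₀ : tm = h₀
  · -- since `Λ h₀ ≤ Λ (h₀ + 1)`, the maximum of `Λ` at `t` is still bounded on the left by `h₀ - 1`
    subst htmh₀
    have hv : Λ (tm + 1) = Λ' t := by rw [← hR]; exact hplat _ (by omega) (by omega)
    refine isMaxAt_of_bounds (c := tm - 1) (d := tp) (by omega) htp hN (by linarith)
      (by rw [hteq, ← hoff tp htph₀]; exact hhi) fun j hj hj' => ?_
    rcases eq_or_ne j tm with rfl | hj0
    · linarith
    · rw [hteq, ← hoff j hj0]; exact (hplat j (by omega) hj').le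
  · have hsame : ∀ j, tm ≤ j → j ≤ tp → Λ j = Λ' j := fun j hj hj' => (hoff j (by omega)).symm
    refine isMaxAt_of_bounds (c := tm) (d := tp) htm htp hN ?_ ?_ fun j hj hj' => ?_
    · rw [hteq, hsame tm le_rfl (by omega)]; exact hlo
    · rw [hteq, hsame tp (by omega) le_rfl]; exact hhi
    · rw [hteq, hsame j hj.le hj'.le]; exact (hplat j hj hj').le

lemma _root_.IsMaxAt.reflect (ht : IsMaxAt N Λ t) : IsMaxAt N (fun j => Λ (N - j)) (N - t) := by
  obtain ⟨tm, tp, htm, htp, hN, hlo, hhi, hplat⟩ := isMaxAt_iff_plateau.1 ht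
  refine isMaxAt_iff_plateau.2 ⟨N - tp, N - tm, by omega, by omega, by omega, ?_, ?_, ?_⟩ <;>
    simp only [Nat.sub_sub_self (show tp ≤ N by omega), Nat.sub_sub_self (show tm ≤ N by omega),
      Nat.sub_sub_self (show t ≤ N by omega)]
  · exact hhi
  · exact hlo
  · exact fun j hj hj' => hplat (N - j) (by omega) (by omega)

lemma widthList_le_of_isMaxAt (h : ∀ t, IsMaxAt N Λ' t → IsMaxAt N Λ t ∧ Λ t = Λ' t) :
    WidthLE (widthList N Λ') (widthList N Λ) := by
  classical
  rw [widthList_eq_sortDesc, widthList_eq_sortDesc]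
  refine widthLE_sortDesc_of_le ?_
  rw [maxValues, maxValues, ← Multiset.map_congr rfl fun t ht => (h t (Finset.mem_filter.1 ht).2).2]
  refine Multiset.map_le_map (Finset.val_le_iff.2 fun t ht => ?_)
  rw [Finset.mem_filter] at ht ⊢
  exact ⟨ht.1, (h t ht.2).1⟩

lemma widthList_lt_of_isMaxAt {M : ℝ}
    (h : ∀ t, IsMaxAt N Λ' t → M ≤ Λ' t → IsMaxAt N Λ t ∧ Λ t = Λ' t)
    {t₀ : ℕ} (ht₀ : IsMaxAt N Λ t₀) (hM : Λ t₀ = M) (hM' : Λ' t₀ ≠ M) :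
    WidthLT (widthList N Λ') (widthList N Λ) := by
  classical
  set F := (range (N + 1)).filter (fun t => IsMaxAt N Λ t)
  set F' := (range (N + 1)).filter (fun t => IsMaxAt N Λ' t)
  set C := F'.filter (fun t => M ≤ Λ' t)
  have hCF : C ⊆ F := fun t ht => by
    simp only [C, F, F', Finset.mem_filter] at ht ⊢
    exact ⟨ht.1.1, (h t ht.1.2 ht.2).1⟩
  have hsplit : ∀ {G : Finset ℕ} (f : ℕ → ℝ), C ⊆ G →
      G.val.map f = C.val.map f + (G \ C).val.map f := fun f hG => by
    rw [← Multiset.map_add, Finset.sdiff_val, add_tsub_cancel_of_le (Finset.val_le_iff.2 hG)]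
  have hCval : C.val.map Λ' = C.val.map Λ := Multiset.map_congr rfl fun t ht => by
    simp only [C, F', Finset.mem_val, Finset.mem_filter] at ht
    exact (h t ht.1.2 ht.2).2.symm
  have ht₀F : t₀ ∈ F := Finset.mem_filter.2 ⟨Finset.mem_range.2 (by have := ht₀.le; omega), ht₀⟩
  have ht₀C : t₀ ∉ C := fun ht => by
    simp only [C, F', Finset.mem_filter] at ht
    exact hM' ((h t₀ ht.1.2 ht.2).2 ▸ hM)
  -- both widths share the values on `C`; besides them `Λ'` has only values `< M`, `Λ` the value `M`
  show WidthLT (sortDesc (F'.val.map Λ')) (sortDesc (F.val.map Λ))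
  rw [hsplit Λ' (Finset.filter_subset _ _), hsplit Λ hCF, hCval]
  refine widthLT_sortDesc_add (M := M) (Multiset.mem_map.2 ⟨t₀, ?_, hM⟩) (fun x hx => ?_) _
  · exact Finset.mem_sdiff.2 ⟨ht₀F, ht₀C⟩
  · obtain ⟨t, ht, rfl⟩ := Multiset.mem_map.1 hx
    simp only [C, Finset.mem_val, Finset.mem_sdiff, Finset.mem_filter, not_and, not_le] at ht
    exact ht.2 ht.1

lemma widthList_lt_of_lt_on {c d t : ℕ} {M : ℝ} (hdN : d ≤ N)
    (hout : ∀ j, j ≤ c ∨ d ≤ j → Λ' j = Λ j) (hle : ∀ j, c < j → j < d → Λ j ≤ M)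
    (hlt : ∀ j, c < j → j < d → Λ' j < M) (hc : Λ c < M) (hd : Λ d < M)
    (hct : c < t) (htd : t < d) (ht : Λ t = M) :
    WidthLT (widthList N Λ') (widthList N Λ) := by
  refine widthList_lt_of_isMaxAt (M := M) (fun s hs hMs => ?_)
    (isMaxAt_of_bounds hct htd hdN (ht ▸ hc) (ht ▸ hd) (ht ▸ hle)) ht (hlt t hct htd).ne
  refine hs.of_eq_outside (c := c) (d := d) (fun j hj => (hout j hj).symm) fun j hcj hjd => ?_
  rcases hcj.eq_or_lt with rfl | hcj
  · linarith [hout c (Or.inl le_rfl)]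
  rcases hjd.eq_or_lt with rfl | hjd
  · linarith [hout j (Or.inr le_rfl)]
  · linarith [hlt j hcj hjd]

lemma widthList_lt_of_lt_shift {p k s : ℕ} (hkN : k ≤ N) (hout : ∀ j, j ≤ p ∨ k ≤ j → Λ' j = Λ j)
    (hlt : ∀ j, p < j → j < k → Λ' j < Λ (j + 1)) (hp : Λ p < Λ (p + 1)) (hps : p < s)
    (hsk : s < k) (hs : Λ k < Λ s) :
    WidthLT (widthList N Λ') (widthList N Λ) := by
  have hne : (Finset.Icc (p + 1) k).Nonempty := ⟨k, Finset.mem_Icc.2 ⟨by omega, le_rfl⟩⟩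
  set M := (Finset.Icc (p + 1) k).sup' hne Λ
  have hle : ∀ j, p < j → j ≤ k → Λ j ≤ M := fun j hj hjk =>
    Finset.le_sup' Λ (Finset.mem_Icc.2 ⟨hj, hjk⟩)
  have hkM : Λ k < M := hs.trans_le (hle s hps hsk.le)
  obtain ⟨t, ht, htM⟩ := Finset.exists_mem_eq_sup' hne Λ
  rw [Finset.mem_Icc] at ht
  have htk : t ≠ k := by rintro rfl; exact hkM.ne htM.symm
  exact widthList_lt_of_lt_on hkN hout (fun j hj hjk => hle j hj hjk.le)
    (fun j hj hjk => (hlt j hj hjk).trans_le (hle (j + 1) (by omega) (by omega)))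
    (hp.trans_le (hle (p + 1) (by omega) (by omega))) hkM (by omega) (by omega) htM.symm

lemma widthList_le_of_update {h₀ : ℕ} (hN : h₀ + 1 ≤ N) (hoff : ∀ j, j ≠ h₀ → Λ' j = Λ j)
    (hdrop : Λ (h₀ - 1) - Λ h₀ ≤ Λ' h₀ - Λ (h₀ + 1)) (hy : Λ' h₀ < Λ (h₀ + 1)) :
    WidthLE (widthList N Λ') (widthList N Λ) := by
  have h₀pos : h₀ ≠ 0 := by
    rintro rfl
    rw [zero_tsub, sub_self, zero_add] at hdrop
    linarith
  -- either `h₀` was a strict maximum, which disappears, or no maximum is created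
  rcases lt_or_ge (Λ (h₀ + 1)) (Λ h₀) with hRx | hxR
  · exact Or.inl <| widthList_lt_of_lt_on (c := h₀ - 1) (d := h₀ + 1) (t := h₀) hN
      (fun j hj => hoff j (by omega)) (fun j _ _ => by rw [show j = h₀ by omega])
      (fun j _ _ => by rw [show j = h₀ by omega]; linarith) (by linarith) hRx
      (by omega) (by omega) rfl
  · exact widthList_le_of_isMaxAt fun t ht =>
      ht.of_update hoff (by linarith) (by linarith) hxR hy

lemma widthList_reflect (N : ℕ) (Λ : ℕ → ℝ) :
    widthList N (fun j => Λ (N - j)) = widthList N Λ := by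
  classical
  have hiff : ∀ t ≤ N, IsMaxAt N (fun j => Λ (N - j)) (N - t) ↔ IsMaxAt N Λ t := fun t ht =>
    ⟨fun h => (isMaxAt_congr fun j hj => by simp only [Nat.sub_sub_self hj]).1
      (Nat.sub_sub_self ht ▸ h.reflect), IsMaxAt.reflect⟩
  have himage : (range (N + 1)).filter (fun t => IsMaxAt N (fun j => Λ (N - j)) t) =
      ((range (N + 1)).filter (fun t => IsMaxAt N Λ t)).image (N - ·) := by
    ext s
    simp only [Finset.mem_filter, Finset.mem_image, Finset.mem_range]
    refine ⟨fun ⟨hs, h⟩ => ⟨N - s, ⟨by omega, ?_⟩, by omega⟩, ?_⟩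
    · exact (hiff (N - s) (by omega)).1 (by rwa [Nat.sub_sub_self (by omega)])
    · rintro ⟨t, ⟨ht, h⟩, rfl⟩
      exact ⟨by omega, (hiff t (by omega)).2 h⟩
  rw [widthList_eq_sortDesc, widthList_eq_sortDesc, maxValues, maxValues]
  congr 1
  rw [himage, Finset.image_val_of_injOn fun s hs t ht hst => by
    simp only [Finset.coe_filter, Finset.mem_range, Set.mem_ofPred_eq] at hs ht hst; omega,
    Multiset.map_map]
  refine Multiset.map_congr rfl fun t ht => ?_
  simp only [Finset.mem_val, Finset.mem_filter, Finset.mem_range] at ht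
  simp only [Function.comp, Nat.sub_sub_self (show t ≤ N by omega)]

lemma isMinAt_iff_isMaxAt_neg : IsMinAt N Λ t ↔ IsMaxAt N (-Λ) t := by
  simp only [IsMinAt, IsMaxAt, Pi.neg_apply, neg_lt_neg_iff, neg_inj]

lemma _root_.IsMinAt.reflect (ht : IsMinAt N Λ t) :
    IsMinAt N (fun j => Λ (N - j)) (N - t) :=
  isMinAt_iff_isMaxAt_neg.2 (isMinAt_iff_isMaxAt_neg.1 ht).reflect

end Maxima

section

variable {Brick Facet : Type} [DecidableEq Brick] [Fintype Facet]

def surfOf (bricksOf : Facet → Finset Brick) (X : Finset Brick) : Finset Facet :=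
  univ.filter (fun f => (∃ T ∈ bricksOf f, T ∈ X) ∧ ∃ T ∈ bricksOf f, T ∉ X)

lemma surfOf_compl [Fintype Brick] (bricksOf : Facet → Finset Brick) (X : Finset Brick) :
    surfOf bricksOf (univ \ X) = surfOf bricksOf X := by
  ext f
  simp only [surfOf, Finset.mem_filter, Finset.mem_univ, Finset.mem_sdiff, true_and, not_not]
  tauto

end

section

variable {Brick : Type} {N : ℕ}

def revOrder (O : Fin N ≃ Brick) : Fin N ≃ Brick := Fin.revPerm.trans O

lemma revOrder_revOrder (O : Fin N ≃ Brick) : revOrder (revOrder O) = O := by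
  ext x
  simp [revOrder]

lemma revOrder_swap_trans (X : Fin N ≃ Brick) (i j : Fin N) :
    revOrder ((Equiv.swap i j).trans X) = (Equiv.swap i.rev j.rev).trans (revOrder X) := by
  ext x
  simp only [revOrder, Equiv.trans_apply, Fin.revPerm_apply]
  rw [← Fin.rev_injective.swap_apply, Fin.rev_rev, Fin.rev_rev]

end

section Surfaces

variable {Brick Facet : Type} [DecidableEq Brick] [Fintype Facet] [DecidableEq Facet]
  {ω : Facet → ℝ} {bricksOf : Facet → Finset Brick}

lemma mem_surfOf_erase (hBC : ∀ f, (bricksOf f).card = 1 ∨ (bricksOf f).card = 2)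
    {A : Brick} {X : Finset Brick} (hA : A ∈ X) (f : Facet) :
    f ∈ surfOf bricksOf (X.erase A) ↔ ¬ (f ∈ surfOf bricksOf X ↔ f ∈ intFacets bricksOf A) := by
  simp only [surfOf, intFacets, Finset.mem_filter, Finset.mem_univ, true_and, Finset.mem_erase]
  by_cases hAf : A ∈ bricksOf f
  · rcases hBC f with h1 | h2
    · obtain ⟨a, ha⟩ := Finset.card_eq_one.1 h1
      rw [ha, Finset.mem_singleton] at hAf
      simp [ha, hAf]
    · obtain ⟨a, b, hab, hs⟩ := Finset.card_eq_two.1 h2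
      rw [hs, Finset.mem_insert, Finset.mem_singleton] at hAf
      rcases hAf with rfl | rfl <;> simp [hs, hab, hab.symm, hA]
  · have hne : ∀ T ∈ bricksOf f, T ≠ A := fun T hT h => hAf (h ▸ hT)
    simp only [hAf, false_and, iff_false, not_not]
    constructor
    · rintro ⟨⟨T, hT, -, hTX⟩, T', hT', hT'X⟩
      exact ⟨⟨T, hT, hTX⟩, T', hT', fun h => hT'X ⟨hne T' hT', h⟩⟩
    · rintro ⟨⟨T, hT, hTX⟩, T', hT', hT'X⟩
      exact ⟨⟨T, hT, hne T hT, hTX⟩, T', hT', fun h => hT'X h.2⟩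

lemma wt_surfOf_erase (hBC : ∀ f, (bricksOf f).card = 1 ∨ (bricksOf f).card = 2)
    {A : Brick} {X : Finset Brick} (hA : A ∈ X) :
    wt ω (surfOf bricksOf (X.erase A)) =
      wt ω (surfOf bricksOf X) + strength ω (intFacets bricksOf A) (surfOf bricksOf X) := by
  set S := surfOf bricksOf X
  set D := intFacets bricksOf A
  have hsymm : surfOf bricksOf (X.erase A) = (S \ D) ∪ (D \ S) := by
    ext f
    rw [mem_surfOf_erase hBC hA, Finset.mem_union, Finset.mem_sdiff, Finset.mem_sdiff]
    tauto
  rw [hsymm, wt, Finset.sum_union disjoint_sdiff_sdiff, strength]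
  have hS := Finset.sum_inter_add_sum_sdiff S D ω
  rw [Finset.inter_comm] at hS
  simp only [wt]
  linarith

lemma strength_surfOf_mono (hω : ∀ f, 0 ≤ ω f) {A : Brick} {X Y : Finset Brick} (hA : A ∈ X)
    (hXY : X ⊆ Y) :
    strength ω (intFacets bricksOf A) (surfOf bricksOf X) ≤
      strength ω (intFacets bricksOf A) (surfOf bricksOf Y) := by
  set D := intFacets bricksOf A
  have hsub : D ∩ surfOf bricksOf Y ⊆ D ∩ surfOf bricksOf X := by
    intro f
    simp only [D, surfOf, intFacets, Finset.mem_inter, Finset.mem_filter, Finset.mem_univ,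
      true_and]
    rintro ⟨⟨hAf, h2⟩, -, T, hT, hTY⟩
    exact ⟨⟨hAf, h2⟩, ⟨A, hAf, hA⟩, T, hT, fun h => hTY (hXY h)⟩
  have hwt : wt ω (D ∩ surfOf bricksOf Y) ≤ wt ω (D ∩ surfOf bricksOf X) :=
    Finset.sum_le_sum_of_subset_of_nonneg hsub fun f _ _ => hω f
  have hX := Finset.sum_inter_add_sum_sdiff D (surfOf bricksOf X) ω
  have hY := Finset.sum_inter_add_sum_sdiff D (surfOf bricksOf Y) ω
  simp only [strength, wt] at hwt ⊢
  linarith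

end Surfaces

variable {Brick Facet : Type} [Fintype Brick] [DecidableEq Brick] [Fintype Facet]
  [DecidableEq Facet] {ω : Facet → ℝ} {bricksOf : Facet → Finset Brick} {N : ℕ}

lemma mem_sublevel {O : Fin N ≃ Brick} {j : ℕ} {T : Brick} :
    T ∈ sublevel O j ↔ ((O.symm T : Fin N) : ℕ) + 1 ≤ j := by
  simp [sublevel]

lemma sublevel_mono (O : Fin N ≃ Brick) {j j' : ℕ} (h : j ≤ j') : sublevel O j ⊆ sublevel O j' :=
  fun _ hT => mem_sublevel.2 ((mem_sublevel.1 hT).trans h)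

lemma sublevel_eq_erase (O : Fin N ≃ Brick) (q : Fin N) :
    sublevel O q = (sublevel O (q + 1)).erase (O q) := by
  ext T
  obtain ⟨p, rfl⟩ := O.surjective T
  simp only [mem_sublevel, Finset.mem_erase, Equiv.symm_apply_apply, ne_eq,
    EmbeddingLike.apply_eq_iff_eq, Fin.ext_iff]
  omega

lemma Lam_eq_wt_surfOf (O : Fin N ≃ Brick) (j : ℕ) :
    Lam ω bricksOf O j = wt ω (surfOf bricksOf (sublevel O j)) := rfl

lemma Lam_eq_add_strength (hBC : ∀ f, (bricksOf f).card = 1 ∨ (bricksOf f).card = 2)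
    (O : Fin N ≃ Brick) (q : Fin N) :
    Lam ω bricksOf O q = Lam ω bricksOf O (q + 1) +
      strength ω (intFacets bricksOf (O q)) (levelSurf bricksOf O (q + 1)) := by
  rw [Lam_eq_wt_surfOf, sublevel_eq_erase O q]
  exact wt_surfOf_erase hBC (mem_sublevel.2 (by simp))

section swap

variable (O : Fin N ≃ Brick) (q : Fin N) (hq : (q : ℕ) + 1 < N)

lemma sublevel_swap_of_ne {j : ℕ} (hj : j ≠ q + 1) :
    sublevel ((Equiv.swap q ⟨q + 1, hq⟩).trans O) j = sublevel O j := by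
  ext T
  obtain ⟨p, rfl⟩ := O.surjective T
  simp only [mem_sublevel, Equiv.symm_trans_apply, Equiv.symm_apply_apply, Equiv.symm_swap,
    Equiv.swap_apply_def]
  split_ifs <;> simp only [Fin.ext_iff] at * <;> omega

lemma sublevel_swap_self :
    sublevel ((Equiv.swap q ⟨q + 1, hq⟩).trans O) (q + 1) = (sublevel O (q + 2)).erase (O q) := by
  ext T
  obtain ⟨p, rfl⟩ := O.surjective T
  simp only [mem_sublevel, Finset.mem_erase, Equiv.symm_trans_apply, Equiv.symm_apply_apply,
    Equiv.symm_swap, Equiv.swap_apply_def, ne_eq, EmbeddingLike.apply_eq_iff_eq]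
  split_ifs <;> simp only [Fin.ext_iff] at * <;> omega

lemma thinStep_swap (hω : ∀ f, 0 ≤ ω f) (hBC : ∀ f, (bricksOf f).card = 1 ∨ (bricksOf f).card = 2)
    (hσ : strength ω (intFacets bricksOf (O q)) (levelSurf bricksOf O (q + 2)) < 0) :
    ThinStep ω bricksOf O ((Equiv.swap q ⟨q + 1, hq⟩).trans O) := by
  have hmem : O q ∈ sublevel O (q + 1) := mem_sublevel.2 (by simp)
  have habove : Lam ω bricksOf ((Equiv.swap q ⟨q + 1, hq⟩).trans O) (q + 1) =
      Lam ω bricksOf O (q + 2) +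
        strength ω (intFacets bricksOf (O q)) (levelSurf bricksOf O (q + 2)) := by
    rw [Lam_eq_wt_surfOf, sublevel_swap_self]
    exact wt_surfOf_erase hBC (sublevel_mono O (by omega) hmem)
  refine ⟨⟨q, hq, rfl⟩, widthList_le_of_update (h₀ := q + 1) (by omega) (fun j hj => ?_) ?_ ?_⟩
  · rw [Lam_eq_wt_surfOf, Lam_eq_wt_surfOf, sublevel_swap_of_ne O q hq hj]
  · rw [Nat.add_sub_cancel, Lam_eq_add_strength hBC O q, habove, add_sub_cancel_left,
      add_sub_cancel_left]
    exact strength_surfOf_mono hω hmem (sublevel_mono O (by omega))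
  · rw [habove]
    linarith

end swap

lemma exists_thinsTo_moveUp (hω : ∀ f, 0 ≤ ω f)
    (hBC : ∀ f, (bricksOf f).card = 1 ∨ (bricksOf f).card = 2) (O : Fin N ≃ Brick) {A : Brick}
    {k : ℕ} (hkN : k ≤ N) (hA : A ∈ sublevel O k)
    (hσ : strength ω (intFacets bricksOf A) (levelSurf bricksOf O k) < 0) :
    ∃ O', ThinsTo ω bricksOf O O' ∧ ∀ j, sublevel O' j =
      if (O.symm A : ℕ) < j ∧ j < k then (sublevel O (j + 1)).erase A else sublevel O j := by
  set p := ((O.symm A : Fin N) : ℕ)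
  have hpk : p + 1 ≤ k := mem_sublevel.1 hA
  have hmove : ∀ i, p + i < k → ∃ O', ThinsTo ω bricksOf O O' ∧
      ((O'.symm A : Fin N) : ℕ) = p + i ∧ ∀ j, sublevel O' j =
        if p < j ∧ j ≤ p + i then (sublevel O (j + 1)).erase A else sublevel O j := by
    intro i
    induction i with
    | zero => exact fun _ => ⟨O, .refl, rfl, fun j => by rw [if_neg (by omega)]⟩
    | succ i ih =>
      intro hi
      obtain ⟨O', hthins, hpos, hsub⟩ := ih (by omega)
      set q : Fin N := O'.symm A
      have hq : (q : ℕ) + 1 < N := by omega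
      have hAq : O' q = A := O'.apply_symm_apply A
      have hstep : ThinStep ω bricksOf O' ((Equiv.swap q ⟨q + 1, hq⟩).trans O') := by
        refine thinStep_swap O' q hq hω hBC ?_
        have hlevel : levelSurf bricksOf O' (q + 2) = levelSurf bricksOf O (q + 2) := by
          rw [levelSurf, levelSurf, hsub, if_neg (by omega)]
        rw [hlevel, hAq]
        refine lt_of_le_of_lt ?_ hσ
        exact strength_surfOf_mono hω (mem_sublevel.2 (by omega)) (sublevel_mono O (by omega))
      refine ⟨_, hthins.tail hstep, ?_, fun j => ?_⟩
      · rw [Equiv.symm_trans_apply, Equiv.symm_swap, Equiv.swap_apply_left]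
        simp only [hpos, q]
        omega
      · rcases eq_or_ne j (q + 1) with rfl | hj
        · rw [sublevel_swap_self, hsub, if_neg (by omega), hAq, if_pos (by omega)]
        · rw [sublevel_swap_of_ne O' q hq hj, hsub]
          congr 1
          apply propext
          omega
  obtain ⟨O', hthins, -, hsub⟩ := hmove (k - p - 1) (by omega)
  exact ⟨O', hthins, fun j => by rw [hsub]; congr 1; apply propext; omega⟩

lemma strength_levelSurf_nonneg (hω : ∀ f, 0 ≤ ω f)
    (hBC : ∀ f, (bricksOf f).card = 1 ∨ (bricksOf f).card = 2) {O : Fin N ≃ Brick}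
    (hthin : LocallyThin ω bricksOf O) {k : ℕ} (hk : IsMinAt N (Lam ω bricksOf O) k) {A : Brick}
    (hA : A ∈ sublevel O k) : 0 ≤ strength ω (intFacets bricksOf A) (levelSurf bricksOf O k) := by
  by_contra! hσk
  obtain ⟨tm, tp, htm, htp, htpN, hdrop, -, hplat⟩ := hk
  set Λ := Lam ω bricksOf O
  set p := ((O.symm A : Fin N) : ℕ)
  have hpk : p + 1 ≤ k := mem_sublevel.1 hA
  have hσ : ∀ j, p + 1 ≤ j → j ≤ k →
      strength ω (intFacets bricksOf A) (levelSurf bricksOf O j) < 0 := fun j hj hjk =>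
    (strength_surfOf_mono hω (mem_sublevel.2 hj) (sublevel_mono O hjk)).trans_lt hσk
  have hrise : Λ p < Λ (p + 1) := by
    have h := Lam_eq_add_strength (ω := ω) hBC O (O.symm A)
    rw [O.apply_symm_apply] at h
    linarith [hσ (p + 1) le_rfl hpk]
  have hptm : p < tm := by
    by_contra! h
    rcases h.eq_or_lt with rfl | h
    · exact hdrop.not_gt hrise
    · linarith [hplat p h (by omega), hplat (p + 1) (by omega) (by omega)]
  have hktm : Λ k < Λ tm := by
    rw [← hplat (tm + 1) (by omega) (by omega)]
    exact hdrop
  obtain ⟨O', hthins, hsub⟩ := exists_thinsTo_moveUp hω hBC O (by omega) hA hσk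
  refine hthin O' hthins (widthList_lt_of_lt_shift (by omega) (fun j hj => ?_)
    (fun j hj hjk => ?_) hrise hptm htm hktm)
  · rw [Lam_eq_wt_surfOf, hsub j, if_neg (by omega)]
    rfl
  · rw [Lam_eq_wt_surfOf, hsub j, if_pos ⟨hj, hjk⟩, wt_surfOf_erase hBC (mem_sublevel.2 (by omega))]
    exact add_lt_of_neg_right _ (hσ (j + 1) (by omega) (by omega))

lemma sublevel_revOrder (O : Fin N ≃ Brick) (j : ℕ) :
    sublevel (revOrder O) j = univ \ sublevel O (N - j) := by
  ext T
  obtain ⟨p, rfl⟩ := O.surjective T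
  simp only [revOrder, mem_sublevel, Finset.mem_sdiff, Finset.mem_univ, true_and,
    Equiv.symm_trans_apply, Equiv.symm_apply_apply, Fin.revPerm_symm, Fin.revPerm_apply,
    Fin.val_rev]
  omega

lemma levelSurf_revOrder (O : Fin N ≃ Brick) (j : ℕ) :
    levelSurf bricksOf (revOrder O) j = levelSurf bricksOf O (N - j) := by
  simp only [levelSurf, sublevel_revOrder]
  exact surfOf_compl bricksOf _

lemma Lam_revOrder (O : Fin N ≃ Brick) :
    Lam ω bricksOf (revOrder O) = fun j => Lam ω bricksOf O (N - j) := by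
  funext j
  rw [Lam, levelSurf_revOrder, Lam]

lemma thinStep_revOrder {X Y : Fin N ≃ Brick} (h : ThinStep ω bricksOf X Y) :
    ThinStep ω bricksOf (revOrder X) (revOrder Y) := by
  obtain ⟨⟨i, hi, rfl⟩, hle⟩ := h
  set i' : Fin N := Fin.rev ⟨i + 1, hi⟩
  have hi' : (i' : ℕ) + 1 < N := by simp only [i', Fin.val_rev]; omega
  have hrev : (⟨i' + 1, hi'⟩ : Fin N) = i.rev := by ext; simp only [i', Fin.val_rev]; omega
  refine ⟨⟨i', hi', by rw [revOrder_swap_trans, hrev, Equiv.swap_comm]⟩, ?_⟩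
  rwa [Lam_revOrder, Lam_revOrder, widthList_reflect, widthList_reflect]

lemma locallyThin_revOrder {O : Fin N ≃ Brick} (h : LocallyThin ω bricksOf O) :
    LocallyThin ω bricksOf (revOrder O) := by
  intro O' hthins hlt
  refine h (revOrder O') ?_ ?_
  · have := Relation.ReflTransGen.lift revOrder (fun _ _ => thinStep_revOrder) _ _ hthins
    rwa [Function.onFun, revOrder_revOrder] at this
  · rw [Lam_revOrder, widthList_reflect]
    rwa [Lam_revOrder, widthList_reflect] at hlt

end LocallyThinOrdering

open LocallyThinOrdering in
/-- if O is a locally thin ordering and k is a minimum of O, then the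
level surface S_k is a stable minimal surface (admits no strict shortening move). -/
theorem stmt11 {Brick Facet : Type} [Fintype Brick] [DecidableEq Brick]
    [Fintype Facet] [DecidableEq Facet]
    (ω : Facet → ℝ) (hω : ∀ f, 0 ≤ ω f)
    (bricksOf : Facet → Finset Brick)
    (hBC : ∀ f, (bricksOf f).card = 1 ∨ (bricksOf f).card = 2)
    {N : ℕ} (O : Fin N ≃ Brick) (hthin : LocallyThin ω bricksOf O)
    (k : ℕ) (hk : IsMinAt N (Lam ω bricksOf O) k) :
    StableMin ω bricksOf (levelSurf bricksOf O k) := by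
  rintro A ⟨-, hσ⟩
  by_cases hA : A ∈ sublevel O k
  · exact (strength_levelSurf_nonneg hω hBC hthin hk hA).not_gt hσ
  have hkN : k ≤ N := by obtain ⟨_, _, _, _, _, _, _, _⟩ := hk; omega
  have hk' : IsMinAt N (Lam ω bricksOf (revOrder O)) (N - k) := by
    rw [Lam_revOrder]
    exact hk.reflect
  have hA' : A ∈ sublevel (revOrder O) (N - k) := by
    simpa [sublevel_revOrder, Nat.sub_sub_self hkN] using hA
  have := strength_levelSurf_nonneg hω hBC (locallyThin_revOrder hthin) hk' hA'
  rw [levelSurf_revOrder, Nat.sub_sub_self hkN] at this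
  exact this.not_gt hσ
end
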